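/- arXiv:1704.04465 — 2 statements merged into one kernel-verified Lean document; each statement's English description precedes it below -/
import Mathlib

section
/- Best response dynamics converges in finite time: every sequence B_0, B_1, …, B_T of feasible profiles in which, for each t < T, there is a cache m_t such that B_{t+1} differs from B_t only in the placement of cache m_t and f^(m_t)(B_{t+1}) < f^(m_t)(B_t), has length T + 1 at most C(J,K)^N (the number of feasible profiles); in particular there is no infinite such strictly improving sequence. -/
open Finset

/-- `qm p B m j` = Σ_{s ∋ m} p_s Π_{ℓ ∈ s \ {m}} (1 - b^(ℓ)_j). -/
noncomputable def qm {N J : ℕ} (p : Finset (Fin N) → ℝ) (B : Fin N → Fin J → ℝ)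
    (m : Fin N) (j : Fin J) : ℝ :=
  ∑ s ∈ Finset.univ.filter (fun s : Finset (Fin N) => m ∈ s),
    p s * ∏ ℓ ∈ s.erase m, (1 - B ℓ j)

/-- Miss probability f(B) = Σ_j a_j Σ_{s ≠ ∅} p_s Π_{ℓ ∈ s} (1 - b^(ℓ)_j). -/
noncomputable def missProb {N J : ℕ} (a : Fin J → ℝ) (p : Finset (Fin N) → ℝ)
    (B : Fin N → Fin J → ℝ) : ℝ :=
  ∑ j, a j * ∑ s ∈ Finset.univ.filter (fun s : Finset (Fin N) => s.Nonempty),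
    p s * ∏ ℓ ∈ s, (1 - B ℓ j)

/-- Local miss probability f^(m)(B) = Σ_j a_j (1 - b^(m)_j) q_m(j). -/
noncomputable def localMiss {N J : ℕ} (a : Fin J → ℝ) (p : Finset (Fin N) → ℝ)
    (B : Fin N → Fin J → ℝ) (m : Fin N) : ℝ :=
  ∑ j, a j * (1 - B m j) * qm p B m j

/-- A feasible placement: a 0/1 vector over the J files with exactly K ones. -/
def IsPlacement {J : ℕ} (K : ℕ) (b : Fin J → ℝ) : Prop :=
  (∀ j, b j = 0 ∨ b j = 1) ∧ ∑ j, b j = (K : ℝ)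

/-!
The miss probability `f` is an exact potential of the caching game: splitting the users
according to whether cache `m` covers them gives `f(B) = f^(m)(B) + g_m(B)`, where
`g_m` (`missProbAvoiding`) does not depend on the placement of cache `m`. Hence every strict
improvement of one cache strictly decreases `f`, so an improving sequence never revisits a
profile, and its length is bounded by the number `C(J,K)^N` of feasible profiles.
-/

section Potential

variable {N J : ℕ} (a : Fin J → ℝ) (p : Finset (Fin N) → ℝ)

noncomputable def missProbAvoiding (B : Fin N → Fin J → ℝ) (m : Fin N) : ℝ :=
  ∑ j, a j * ∑ s ∈ univ.filter (fun s : Finset (Fin N) => s.Nonempty ∧ m ∉ s),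
    p s * ∏ ℓ ∈ s, (1 - B ℓ j)

theorem missProb_eq_localMiss_add (B : Fin N → Fin J → ℝ) (m : Fin N) :
    missProb a p B = localMiss a p B m + missProbAvoiding a p B m := by
  unfold missProb localMiss qm missProbAvoiding
  rw [← sum_add_distrib]
  refine sum_congr rfl fun j _ => ?_
  have hcover : (univ.filter fun s : Finset (Fin N) => s.Nonempty).filter (m ∈ ·)
      = univ.filter (m ∈ ·) := by
    ext s
    simpa using fun h => ⟨m, h⟩
  have hmiss : (univ.filter fun s : Finset (Fin N) => s.Nonempty).filter (m ∉ ·)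
      = univ.filter fun s => s.Nonempty ∧ m ∉ s := by
    ext s
    simp
  have hfactor : ∑ s ∈ univ.filter (m ∈ ·), p s * ∏ ℓ ∈ s, (1 - B ℓ j)
      = (1 - B m j) * ∑ s ∈ univ.filter (m ∈ ·), p s * ∏ ℓ ∈ s.erase m, (1 - B ℓ j) := by
    rw [mul_sum]
    refine sum_congr rfl fun s hs => ?_
    rw [← mul_prod_erase s _ (mem_filter.mp hs).2]
    ring
  rw [← sum_filter_add_sum_filter_not _ (m ∈ ·), hcover, hmiss, hfactor]
  ring

theorem missProbAvoiding_congr {B B' : Fin N → Fin J → ℝ} {m : Fin N}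
    (h : ∀ ℓ, ℓ ≠ m → B' ℓ = B ℓ) :
    missProbAvoiding a p B' m = missProbAvoiding a p B m := by
  refine sum_congr rfl fun j _ => congrArg _ <| sum_congr rfl fun s hs => ?_
  have hm : m ∉ s := (mem_filter.mp hs).2.2
  refine congrArg _ <| prod_congr rfl fun ℓ hℓ => ?_
  rw [h ℓ (ne_of_mem_of_not_mem hℓ hm)]

theorem missProb_lt_of_localMiss_lt {B B' : Fin N → Fin J → ℝ} {m : Fin N}
    (h : ∀ ℓ, ℓ ≠ m → B' ℓ = B ℓ) (hlt : localMiss a p B' m < localMiss a p B m) :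
    missProb a p B' < missProb a p B := by
  rw [missProb_eq_localMiss_add a p B m, missProb_eq_localMiss_add a p B' m,
    missProbAvoiding_congr a p h]
  exact add_lt_add_left hlt _

end Potential

def fileIndicator {J : ℕ} (s : Finset (Fin J)) : Fin J → ℝ :=
  fun j => if j ∈ s then 1 else 0

theorem fileIndicator_injective {J : ℕ} : Function.Injective (fileIndicator (J := J)) := by
  intro s t hst
  ext j
  have := congrFun hst j
  unfold fileIndicator at this
  split_ifs at this <;> simp_all

noncomputable def placements (J K : ℕ) : Finset (Fin J → ℝ) :=
  (powersetCard K univ).image fileIndicator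

theorem card_placements (J K : ℕ) : #(placements J K) = J.choose K := by
  rw [placements, card_image_of_injective _ fileIndicator_injective, card_powersetCard,
    card_univ, Fintype.card_fin]

theorem IsPlacement.mem_placements {J K : ℕ} {b : Fin J → ℝ} (hb : IsPlacement K b) :
    b ∈ placements J K := by
  obtain ⟨h01, hsum⟩ := hb
  have hb_eq : fileIndicator (univ.filter (b · = 1)) = b := by
    funext j
    rcases h01 j with h | h <;> simp [fileIndicator, h]
  refine mem_image.mpr ⟨univ.filter (b · = 1), mem_powersetCard.mpr ⟨subset_univ _, ?_⟩, hb_eq⟩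
  rw [← hb_eq] at hsum
  simpa [fileIndicator, sum_boole] using hsum

theorem brd_converges_finite_time_general (N J K T : ℕ)
    (a : Fin J → ℝ)
    (p : Finset (Fin N) → ℝ)
    (B : ℕ → Fin N → Fin J → ℝ)
    (hfeas : ∀ t ≤ T, ∀ m, IsPlacement K (B t m))
    (himp : ∀ t < T, ∃ m : Fin N,
      (∀ ℓ, ℓ ≠ m → B (t + 1) ℓ = B t ℓ) ∧
      localMiss a p (B (t + 1)) m < localMiss a p (B t) m) :
    T + 1 ≤ (J.choose K) ^ N := by
  have hdecr : StrictAntiOn (fun t => missProb a p (B t)) (Set.Iic T) :=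
    strictAntiOn_Iic_of_succ_lt fun t ht => by
      obtain ⟨m, hoff, hlt⟩ := himp t ht
      exact missProb_lt_of_localMiss_lt a p hoff hlt
  have hmaps : Set.MapsTo B (Iic T) (Fintype.piFinset fun _ : Fin N => placements J K) :=
    fun t ht => Fintype.mem_piFinset.mpr fun m => (hfeas t (mem_Iic.mp ht) m).mem_placements
  have hinj : Set.InjOn B (Iic T) := by
    rw [coe_Iic]
    exact Set.InjOn.of_comp (g := missProb a p) hdecr.injOn
  calc T + 1 = #(Iic T) := (Nat.card_Iic T).symm
    _ ≤ #(Fintype.piFinset fun _ : Fin N => placements J K) := card_le_card_of_injOn B hmaps hinj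
    _ = (J.choose K) ^ N := by rw [Fintype.card_piFinset_const, card_placements]

/-- every strictly improving best-response sequence of feasible profiles has
length at most C(J,K)^N; in particular there is no infinite strictly improving sequence. -/
theorem brd_converges_finite_time (N J K T : ℕ) (hK1 : 1 ≤ K) (hKJ : K ≤ J)
    (a : Fin J → ℝ) (ha : ∀ j, 0 ≤ a j) (hasum : ∑ j, a j = 1)
    (p : Finset (Fin N) → ℝ) (hp : ∀ s, 0 ≤ p s)
    (hpsum : ∑ s ∈ Finset.univ.filter (fun s : Finset (Fin N) => s.Nonempty), p s = 1)
    (B : ℕ → Fin N → Fin J → ℝ)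
    (hfeas : ∀ t ≤ T, ∀ m, IsPlacement K (B t m))
    (himp : ∀ t < T, ∃ m : Fin N,
      (∀ ℓ, ℓ ≠ m → B (t + 1) ℓ = B t ℓ) ∧
      localMiss a p (B (t + 1)) m < localMiss a p (B t) m) :
    T + 1 ≤ (J.choose K) ^ N :=
  brd_converges_finite_time_general N J K T a p B hfeas himp
end

section
/- Restricted search space for the best response: assume the popularities are non-increasing, a_1 ≥ a_2 ≥ … ≥ a_J. Fix a cache m and placements b^(ℓ) ∈ {0,1}^J of the other caches, let T = {j : b^(ℓ)_j = 1 for some ℓ ≠ m} and let S = max T (S = 0 if T is empty). Then there exists a minimizer b̄^(m) of f^(m)(·, b^(−m)) over {b ∈ {0,1}^J : Σ_{j=1}^J b_j = K} such that b̄^(m)_j = 0 for every file j > S + K; that is, a best response exists that stores only files among the first S + K most popular ones. -/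
open Finset

/-!
Minimizing `f^(m)(·, b^(-m))` over placements amounts to maximizing `∑_{j ∈ C} a_j q_m(j)` over
`K`-sets `C`. A file `j` at or beyond `S` (0-based) is stored by no other cache, so `q_m(j)` attains
its maximum `Q = ∑_{s ∋ m} p_s`; hence `a_j q_m(j) ≤ a_j Q ≤ a_i Q = a_i q_m(i)` whenever `S ≤ i ≤ j`.
A file beyond `S + K` in an optimal set can therefore be swapped for a free file in `[S, S + K)`
without loss, and among the optimal sets one with the most files below `S + K` has all of them there.
-/

section Exchange

variable {ι β : Type*} [DecidableEq ι] [AddCommMonoid β] [LinearOrder β] [IsOrderedAddMonoid β]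

theorem exists_max_sum_powersetCard_forall_of_exchange (s : Finset ι) (w : ι → β)
    (P : ι → Prop) [DecidablePred P] {K : ℕ} (hK : K ≤ s.card)
    (hexch : ∀ A ⊆ s, A.card = K → ∀ j ∈ A, ¬ P j → ∃ i ∈ s, i ∉ A ∧ P i ∧ w j ≤ w i) :
    ∃ A ⊆ s, A.card = K ∧ (∀ C ⊆ s, C.card = K → ∑ i ∈ C, w i ≤ ∑ i ∈ A, w i) ∧
      ∀ j ∈ A, P j := by
  set maximizers := (s.powersetCard K).filter
    fun A => ∀ C ∈ s.powersetCard K, ∑ i ∈ C, w i ≤ ∑ i ∈ A, w i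
  obtain ⟨A₀, hA₀, hA₀max⟩ :=
    (s.powersetCard K).exists_max_image (fun A => ∑ i ∈ A, w i) (powersetCard_nonempty.2 hK)
  obtain ⟨A, hA, hAmax⟩ := maximizers.exists_max_image (fun A => (A.filter P).card)
    ⟨A₀, mem_filter.2 ⟨hA₀, hA₀max⟩⟩
  obtain ⟨hAs, hAcard⟩ := mem_powersetCard.1 (mem_filter.1 hA).1
  have hAopt := (mem_filter.1 hA).2
  refine ⟨A, hAs, hAcard, fun C hCs hC => hAopt C (mem_powersetCard.2 ⟨hCs, hC⟩), ?_⟩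
  by_contra! ⟨j, hjA, hPj⟩
  obtain ⟨i, his, hiA, hPi, hji⟩ := hexch A hAs hAcard j hjA hPj
  have hiA' : i ∉ A.erase j := fun h => hiA (mem_of_mem_erase h)
  set A' := insert i (A.erase j)
  have hA'card : A'.card = K := by
    rw [card_insert_of_notMem hiA', card_erase_of_mem hjA, hAcard]
    have : 0 < K := hAcard ▸ card_pos.2 ⟨j, hjA⟩
    omega
  have hA'sum : ∑ k ∈ A, w k ≤ ∑ k ∈ A', w k := by
    rw [sum_insert hiA', ← sum_erase_add A w hjA, add_comm]
    exact add_le_add_left hji _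
  have hA'mem : A' ∈ maximizers := by
    refine mem_filter.2 ⟨mem_powersetCard.2 ⟨?_, hA'card⟩, fun C hC => (hAopt C hC).trans hA'sum⟩
    exact insert_subset his ((erase_subset j A).trans hAs)
  have hA'filter : A'.filter P = insert i (A.filter P) := by
    rw [filter_insert, if_pos hPi, filter_erase, erase_eq_of_notMem]
    exact fun h => hPj (mem_filter.1 h).2
  have := hAmax A' hA'mem
  rw [hA'filter, card_insert_of_notMem fun h => hiA (mem_filter.1 h).1] at this
  omega

end Exchange

theorem notMem_of_sup_succ_le {J : ℕ} {T : Finset (Fin J)} {j : Fin J}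
    (hj : T.sup (fun j' => (j' : ℕ) + 1) ≤ j) : j ∉ T := fun hjT => by
  have := le_sup (f := fun j' : Fin J => (j' : ℕ) + 1) hjT
  omega

theorem exists_mem_Ico_notMem_of_card_le {J S K : ℕ} {A : Finset (Fin J)} (hA : A.card ≤ K)
    {j : Fin J} (hjA : j ∈ A) (hj : S + K ≤ j) : ∃ i : Fin J, (i : ℕ) ∈ Ico S (S + K) ∧ i ∉ A := by
  set I : Finset (Fin J) := (Ico S (S + K)).attachFin fun i hi => by
    have := (mem_Ico.1 hi).2; omega
  by_contra! hIA
  have hIcard : A.card ≤ I.card := by simpa [I] using hA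
  rw [← eq_of_subset_of_card_le (fun i hi => hIA i (mem_attachFin _ |>.1 hi)) hIcard] at hjA
  have := (mem_Ico.1 (mem_attachFin _ |>.1 hjA)).2
  omega

def indicatorPlacement {J : ℕ} (C : Finset (Fin J)) : Fin J → ℝ :=
  fun j => if j ∈ C then 1 else 0

theorem sum_indicatorPlacement_mul {J : ℕ} (C : Finset (Fin J)) (w : Fin J → ℝ) :
    ∑ j, indicatorPlacement C j * w j = ∑ j ∈ C, w j := by
  simp only [indicatorPlacement, ite_mul, one_mul, zero_mul, sum_ite_mem, univ_inter]

theorem isPlacement_iff {J K : ℕ} {b : Fin J → ℝ} :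
    IsPlacement K b ↔ ∃ C : Finset (Fin J), C.card = K ∧ b = indicatorPlacement C := by
  constructor
  · rintro ⟨hb01, hbsum⟩
    have hb : b = indicatorPlacement (univ.filter fun j => b j = 1) := by
      funext j
      rcases hb01 j with h | h <;> simp [indicatorPlacement, h]
    refine ⟨_, ?_, hb⟩
    rw [hb] at hbsum
    simpa [indicatorPlacement] using hbsum
  · rintro ⟨C, hC, rfl⟩
    refine ⟨fun j => ?_, ?_⟩
    · by_cases h : j ∈ C <;> simp [indicatorPlacement, h]
    · simp [indicatorPlacement, hC]

section LocalMiss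

variable {N J : ℕ} (p : Finset (Fin N) → ℝ) (B : Fin N → Fin J → ℝ) (m : Fin N)

theorem qm_update_self (b : Fin J → ℝ) (j : Fin J) :
    qm p (Function.update B m b) m j = qm p B m j := by
  refine sum_congr rfl fun s _ => congrArg _ (prod_congr rfl fun ℓ hℓ => ?_)
  rw [Function.update_of_ne (ne_of_mem_erase hℓ)]

theorem qm_le_sum (hp : ∀ s, 0 ≤ p s) (j : Fin J)
    (hB : ∀ ℓ, ℓ ≠ m → 0 ≤ B ℓ j ∧ B ℓ j ≤ 1) :
    qm p B m j ≤ ∑ s ∈ univ.filter (fun s : Finset (Fin N) => m ∈ s), p s := by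
  refine sum_le_sum fun s _ => mul_le_of_le_one_right (hp s) (prod_le_one ?_ ?_) <;>
    intro ℓ hℓ <;> linarith [hB ℓ (ne_of_mem_erase hℓ)]

theorem qm_eq_sum_of_eq_zero (j : Fin J) (hB : ∀ ℓ, ℓ ≠ m → B ℓ j = 0) :
    qm p B m j = ∑ s ∈ univ.filter (fun s : Finset (Fin N) => m ∈ s), p s := by
  refine sum_congr rfl fun s _ => ?_
  rw [prod_eq_one fun ℓ hℓ => by rw [hB ℓ (ne_of_mem_erase hℓ), sub_zero], mul_one]

theorem mul_qm_le_mul_qm (hp : ∀ s, 0 ≤ p s) {i j : Fin J} {x y : ℝ} (hx : 0 ≤ x) (hxy : x ≤ y)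
    (hBi : ∀ ℓ, ℓ ≠ m → B ℓ i = 0) (hBj : ∀ ℓ, ℓ ≠ m → 0 ≤ B ℓ j ∧ B ℓ j ≤ 1) :
    x * qm p B m j ≤ y * qm p B m i := by
  rw [qm_eq_sum_of_eq_zero p B m i hBi]
  calc x * qm p B m j ≤ x * ∑ s ∈ univ.filter (fun s : Finset (Fin N) => m ∈ s), p s :=
        mul_le_mul_of_nonneg_left (qm_le_sum p B m hp j hBj) hx
    _ ≤ _ := mul_le_mul_of_nonneg_right hxy (sum_nonneg fun s _ => hp s)

theorem localMiss_update_self (a : Fin J → ℝ) (b : Fin J → ℝ) :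
    localMiss a p (Function.update B m b) m =
      ∑ j, a j * qm p B m j - ∑ j, b j * (a j * qm p B m j) := by
  rw [localMiss, ← sum_sub_distrib]
  refine sum_congr rfl fun j _ => ?_
  rw [Function.update_self, qm_update_self]
  ring

end LocalMiss

theorem restricted_search_space_general (N J K : ℕ) (hKJ : K ≤ J) (m : Fin N)
    (a : Fin J → ℝ) (ha : ∀ j, 0 ≤ a j)
    (hmono : ∀ i j : Fin J, i ≤ j → a j ≤ a i)
    (p : Finset (Fin N) → ℝ) (hp : ∀ s, 0 ≤ p s)
    (B : Fin N → Fin J → ℝ)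
    (hB : ∀ ℓ, ℓ ≠ m → ∀ j, B ℓ j = 0 ∨ B ℓ j = 1) :
    ∃ bbar : Fin J → ℝ, IsPlacement K bbar ∧
      (∀ b : Fin J → ℝ, IsPlacement K b →
        localMiss a p (Function.update B m bbar) m ≤
          localMiss a p (Function.update B m b) m) ∧
      (∀ j : Fin J,
        (Finset.univ.filter (fun j' : Fin J => ∃ ℓ, ℓ ≠ m ∧ B ℓ j' = 1)).sup
            (fun j' => (j' : ℕ) + 1) + K < (j : ℕ) + 1 →
        bbar j = 0) := by
  classical
  set S := (univ.filter (fun j' : Fin J => ∃ ℓ, ℓ ≠ m ∧ B ℓ j' = 1)).sup (fun j' => (j' : ℕ) + 1)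
  set w : Fin J → ℝ := fun j => a j * qm p B m j
  have hB01 : ∀ ℓ, ℓ ≠ m → ∀ j, 0 ≤ B ℓ j ∧ B ℓ j ≤ 1 := fun ℓ hℓ j => by
    rcases hB ℓ hℓ j with h | h <;> simp [h]
  have hS : ∀ i : Fin J, S ≤ i → ∀ ℓ, ℓ ≠ m → B ℓ i = 0 := fun i hi ℓ hℓ =>
    (hB ℓ hℓ i).resolve_right fun h => notMem_of_sup_succ_le hi (mem_filter.2 ⟨mem_univ _, ℓ, hℓ, h⟩)
  have hexch : ∀ A ⊆ (univ : Finset (Fin J)), A.card = K → ∀ j ∈ A, ¬ (j : ℕ) < S + K →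
      ∃ i ∈ univ, i ∉ A ∧ (i : ℕ) < S + K ∧ w j ≤ w i := by
    intro A _ hA j hjA hj
    obtain ⟨i, hi, hiA⟩ := exists_mem_Ico_notMem_of_card_le hA.le hjA (not_lt.1 hj)
    obtain ⟨hSi, hiSK⟩ := mem_Ico.1 hi
    refine ⟨i, mem_univ i, hiA, hiSK, mul_qm_le_mul_qm p B m hp (ha j) ?_ (hS i hSi) (hB01 · · j)⟩
    exact hmono i j (Fin.le_def.2 (by omega))
  obtain ⟨A, -, hAcard, hAmax, hAS⟩ := exists_max_sum_powersetCard_forall_of_exchange univ w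
    (fun j => (j : ℕ) < S + K) (by simpa using hKJ) hexch
  refine ⟨indicatorPlacement A, isPlacement_iff.2 ⟨A, hAcard, rfl⟩, fun b hb => ?_, fun j hj => ?_⟩
  · obtain ⟨C, hC, rfl⟩ := isPlacement_iff.1 hb
    rw [localMiss_update_self, localMiss_update_self, sum_indicatorPlacement_mul,
      sum_indicatorPlacement_mul]
    linarith [hAmax C (subset_univ C) hC]
  · have hjA : j ∉ A := fun h => by have := hAS j h; omega
    simp [indicatorPlacement, hjA]

/-- if the popularities are non-increasing then there is a best response of
cache m storing only files among the first S + K (in 1-based numbering), where S is the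
largest (1-based) index of a file stored by some other cache (S = 0 if none). -/
theorem restricted_search_space (N J K : ℕ) (hK1 : 1 ≤ K) (hKJ : K ≤ J) (m : Fin N)
    (a : Fin J → ℝ) (ha : ∀ j, 0 ≤ a j) (hasum : ∑ j, a j = 1)
    (hmono : ∀ i j : Fin J, i ≤ j → a j ≤ a i)
    (p : Finset (Fin N) → ℝ) (hp : ∀ s, 0 ≤ p s)
    (hpsum : ∑ s ∈ Finset.univ.filter (fun s : Finset (Fin N) => s.Nonempty), p s = 1)
    (B : Fin N → Fin J → ℝ)
    (hB : ∀ ℓ, ℓ ≠ m → ∀ j, B ℓ j = 0 ∨ B ℓ j = 1) :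
    ∃ bbar : Fin J → ℝ, IsPlacement K bbar ∧
      (∀ b : Fin J → ℝ, IsPlacement K b →
        localMiss a p (Function.update B m bbar) m ≤
          localMiss a p (Function.update B m b) m) ∧
      (∀ j : Fin J,
        (Finset.univ.filter (fun j' : Fin J => ∃ ℓ, ℓ ≠ m ∧ B ℓ j' = 1)).sup
            (fun j' => (j' : ℕ) + 1) + K < (j : ℕ) + 1 →
        bbar j = 0) :=
  restricted_search_space_general N J K hKJ m a ha hmono p hp B hB
end
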